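/- Error representation at the exact discrete solutions (iteration error vanishes): Under the hypotheses of Theorem 1 — V a real Banach space, A : V → (V →L[ℝ] ℝ) and J : V → ℝ three times continuously Fréchet differentiable, V_h ⊆ V_N ⊆ V nested linear subspaces, u ∈ V with A(u)(v) = 0 for all v ∈ V, u₂ ∈ V_N with A(u₂)(v) = 0 for all v ∈ V_N, z₂ ∈ V_N with A'(u₂)(v)(z₂) = J'(u₂)(v) for all v ∈ V_N — suppose additionally that u_h ∈ V_h satisfies A(u_h)(v) = 0 for all v ∈ V_h and z_h ∈ V_h. Then ρ(u_h)(z_h) = 0, and consequently J(u) − J(u_h) = (J(u) − J(u₂)) + η_h + R⁽³⁾, where η_h := (1/2)(ρ(u_h)(z₂ − z_h) + ρ*(u_h, z_h)(u₂ − u_h)) and R⁽³⁾ is the remainder of Theorem 1 with ũ = u_h, z̃ = z_h, e = u₂ − u_h, e* = z₂ − z_h. -/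

import Mathlib

/-!
Along the segment `s ↦ (u_h + s e, z_h + s e*)` the Lagrangian `L(x, y) = J(x) - A(x)(y)` runs
from `J(u_h) - A(u_h)(z_h)` to `J(u₂)`, and its derivative vanishes at `s = 1` because `(u₂, z₂)`
solves the primal and adjoint problems on `V_N`, which contains `e` and `e*`. The trapezoidal rule
with Peano kernel `s (s - 1)` then expresses `J(u₂) - J(u_h)` as half the derivative at `s = 0`,
plus `ρ(u_h)(z_h)`, plus `R⁽³⁾`; and `ρ(u_h)(z_h) = 0` since `z_h ∈ V_h`.
-/

open intervalIntegral Set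

theorem sub_eq_trapezoid_add_integral_mul_third_deriv
    {φ φ₁ φ₂ φ₃ : ℝ → ℝ} {a b : ℝ}
    (hφ : ∀ s ∈ uIcc a b, HasDerivAt φ (φ₁ s) s)
    (hφ₁ : ∀ s ∈ uIcc a b, HasDerivAt φ₁ (φ₂ s) s)
    (hφ₂ : ∀ s ∈ uIcc a b, HasDerivAt φ₂ (φ₃ s) s)
    (hφ₃ : IntervalIntegrable φ₃ MeasureTheory.volume a b) :
    φ b - φ a = (b - a) / 2 * (φ₁ a + φ₁ b)
      + 1 / 2 * ∫ s in a..b, φ₃ s * ((s - a) * (s - b)) := by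
  have hcont₁ : ContinuousOn φ₁ (uIcc a b) :=
    fun s hs => (hφ₁ s hs).continuousAt.continuousWithinAt
  have hcont₂ : ContinuousOn φ₂ (uIcc a b) :=
    fun s hs => (hφ₂ s hs).continuousAt.continuousWithinAt
  have hkernel : ∀ s ∈ uIcc a b, HasDerivAt (fun t => (t - a) * (t - b)) (2 * s - a - b) s := by
    intro s _
    exact (((hasDerivAt_id' s).sub_const a).mul ((hasDerivAt_id' s).sub_const b)).congr_deriv
      (by ring)
  have hslope : ∀ s ∈ uIcc a b, HasDerivAt (fun t => 2 * t - a - b) 2 s := by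
    intro s _
    simpa using (((hasDerivAt_id' s).const_mul 2).sub_const a).sub_const b
  have ftc : ∫ s in a..b, φ₁ s = φ b - φ a :=
    integral_eq_sub_of_hasDerivAt hφ hcont₁.intervalIntegrable
  have ibp₁ : ∫ s in a..b, (s - a) * (s - b) * φ₃ s = - ∫ s in a..b, (2 * s - a - b) * φ₂ s := by
    rw [integral_mul_deriv_eq_deriv_mul hkernel hφ₂
      ((by fun_prop : Continuous fun s : ℝ => 2 * s - a - b).intervalIntegrable a b) hφ₃]
    ring
  have ibp₂ : ∫ s in a..b, (2 * s - a - b) * φ₂ s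
      = (b - a) * (φ₁ a + φ₁ b) - 2 * ∫ s in a..b, φ₁ s := by
    rw [integral_mul_deriv_eq_deriv_mul hslope hφ₁ intervalIntegrable_const
      hcont₂.intervalIntegrable, integral_const_mul]
    ring
  have hcomm : ∫ s in a..b, φ₃ s * ((s - a) * (s - b))
      = ∫ s in a..b, (s - a) * (s - b) * φ₃ s := by
    simp only [mul_comm (φ₃ _)]
  rw [hcomm, ibp₁, ibp₂, ftc]
  ring

theorem ContDiffAt.hasDerivAt_iteratedFDeriv_comp_add_smul {𝕜 E F : Type*}
    [NontriviallyNormedField 𝕜] [NormedAddCommGroup E] [NormedSpace 𝕜 E]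
    [NormedAddCommGroup F] [NormedSpace 𝕜 F] {f : E → F} {x y : E} {t : 𝕜} {k : ℕ}
    (hf : ContDiffAt 𝕜 (k + 1) f (x + t • y)) :
    HasDerivAt (fun s : 𝕜 => iteratedFDeriv 𝕜 k f (x + s • y) (fun _ => y))
      (iteratedFDeriv 𝕜 (k + 1) f (x + t • y) (fun _ => y)) t := by
  have hdiff : DifferentiableAt 𝕜 (iteratedFDeriv 𝕜 k f) (x + t • y) :=
    hf.differentiableAt_iteratedFDeriv (by norm_cast; exact lt_add_one k)
  rw [← hf.deriv_fderiv_add_smul]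
  exact ((hdiff.continuousMultilinear_apply_const (fun _ => y)).comp
    (f := fun s : 𝕜 => x + s • y) t (by fun_prop)).hasDerivAt

theorem HasDerivAt.clm_apply_add_smul {E F : Type*} [NormedAddCommGroup E] [NormedSpace ℝ E]
    [NormedAddCommGroup F] [NormedSpace ℝ F] {G : ℝ → E →L[ℝ] F} {G' : E →L[ℝ] F} {t : ℝ}
    (hG : HasDerivAt G G' t) (y w : E) :
    HasDerivAt (fun s => G s (y + s • w)) (G' (y + t • w) + G t w) t := by
  have hline : HasDerivAt (fun s : ℝ => y + s • w) w t := by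
    simpa using ((hasDerivAt_id t).smul_const w).const_add y
  exact hG.clm_apply hline

section Lagrangian

variable {V : Type*} [NormedAddCommGroup V] [NormedSpace ℝ V]

noncomputable def lagrangian (A : V → V →L[ℝ] ℝ) (J : V → ℝ) (x y : V) : ℝ := J x - A x y

/-- The `(k + 1)`-st derivative of `t ↦ lagrangian A J (x + t • e) (y + t • w)`; the factor
`k + 1` is the Leibniz rule, the second argument being affine in `t`. -/
noncomputable def lagrangianLineDeriv (A : V → V →L[ℝ] ℝ) (J : V → ℝ) (x y e w : V) (k : ℕ)
    (t : ℝ) : ℝ :=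
  iteratedFDeriv ℝ (k + 1) J (x + t • e) (fun _ => e)
    - iteratedFDeriv ℝ (k + 1) A (x + t • e) (fun _ => e) (y + t • w)
    - (k + 1) * iteratedFDeriv ℝ k A (x + t • e) (fun _ => e) w

variable {A : V → V →L[ℝ] ℝ} {J : V → ℝ} {x y e w : V}

theorem hasDerivAt_lagrangian_comp_add_smul (hA : ContDiff ℝ 1 A) (hJ : ContDiff ℝ 1 J) (t : ℝ) :
    HasDerivAt (fun s => lagrangian A J (x + s • e) (y + s • w))
      (lagrangianLineDeriv A J x y e w 0 t) t := by
  have hJt := (hJ.contDiffAt (x := x + t • e)).hasDerivAt_iteratedFDeriv_comp_add_smul (k := 0)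
  have hAt := (hA.contDiffAt (x := x + t • e)).hasDerivAt_iteratedFDeriv_comp_add_smul (k := 0)
  simp only [iteratedFDeriv_zero_apply] at hJt hAt
  refine (hJt.sub (hAt.clm_apply_add_smul y w)).congr_deriv ?_
  simp only [lagrangianLineDeriv, iteratedFDeriv_zero_apply, CharP.cast_eq_zero]
  ring

theorem hasDerivAt_lagrangianLineDeriv {k : ℕ} (hA : ContDiff ℝ (k + 2) A)
    (hJ : ContDiff ℝ (k + 2) J) (t : ℝ) :
    HasDerivAt (lagrangianLineDeriv A J x y e w k)
      (lagrangianLineDeriv A J x y e w (k + 1) t) t := by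
  have hJt := (hJ.contDiffAt (x := x + t • e)).hasDerivAt_iteratedFDeriv_comp_add_smul (k := k + 1)
  have hAt := (hA.contDiffAt (x := x + t • e)).hasDerivAt_iteratedFDeriv_comp_add_smul (k := k + 1)
  have hAt' := ((hA.of_le (by norm_cast; omega)).contDiffAt
    (x := x + t • e)).hasDerivAt_iteratedFDeriv_comp_add_smul (k := k)
  refine ((hJt.sub (hAt.clm_apply_add_smul y w)).sub
    ((hAt'.clm_apply (hasDerivAt_const t w)).const_mul ((k : ℝ) + 1))).congr_deriv ?_
  simp only [lagrangianLineDeriv, map_zero]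
  push_cast
  ring

theorem continuous_lagrangianLineDeriv {k : ℕ} (hA : ContDiff ℝ (k + 1) A)
    (hJ : ContDiff ℝ (k + 1) J) : Continuous (lagrangianLineDeriv A J x y e w k) := by
  have hJc := hJ.continuous_iteratedFDeriv (m := k + 1) (by norm_cast)
  have hAc := hA.continuous_iteratedFDeriv (m := k + 1) (by norm_cast)
  have hAc' := hA.continuous_iteratedFDeriv (m := k) (by norm_cast; omega)
  unfold lagrangianLineDeriv
  fun_prop

theorem lagrangianLineDeriv_zero_apply (t : ℝ) :
    lagrangianLineDeriv A J x y e w 0 t = fderiv ℝ J (x + t • e) e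
      - fderiv ℝ A (x + t • e) e (y + t • w) - A (x + t • e) w := by
  simp [lagrangianLineDeriv]

/-- The remainder `R⁽³⁾` with `ũ = x`, `z̃ = y`, `e* = w`. -/
noncomputable def dwrRemainder (A : V → V →L[ℝ] ℝ) (J : V → ℝ) (x y e w : V) : ℝ :=
  (1/2) * ∫ s in (0:ℝ)..1,
    (iteratedFDeriv ℝ 3 J (x + s • e) ![e, e, e]
      - (iteratedFDeriv ℝ 3 A (x + s • e) ![e, e, e]) (y + s • w)
      - 3 * (iteratedFDeriv ℝ 2 A (x + s • e) ![e, e]) w)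
    * (s * (s - 1))

theorem dwrRemainder_eq_integral_lagrangianLineDeriv :
    dwrRemainder A J x y e w
      = 1 / 2 * ∫ s in (0:ℝ)..1, lagrangianLineDeriv A J x y e w 2 s * (s * (s - 1)) := by
  simp only [dwrRemainder, lagrangianLineDeriv, Matrix.vec_single_eq_const,
    Matrix.vecCons_const]
  norm_num

theorem dwr_error_representation (hA : ContDiff ℝ 3 A) (hJ : ContDiff ℝ 3 J) (S : Submodule ℝ V)
    {u z : V} (hu : u ∈ S) (hz : z ∈ S) (hx : x ∈ S) (hy : y ∈ S)
    (hprimal : ∀ v ∈ S, A u v = 0) (hadjoint : ∀ v ∈ S, fderiv ℝ A u v z = fderiv ℝ J u v) :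
    J u - J x
      = (1/2) * (-(A x (z - y)) + (fderiv ℝ J x (u - x) - fderiv ℝ A x (u - x) y))
        + -(A x y) + dwrRemainder A J x y (u - x) (z - y) := by
  have trapezoid := sub_eq_trapezoid_add_integral_mul_third_deriv (a := 0) (b := 1)
    (φ := fun s => lagrangian A J (x + s • (u - x)) (y + s • (z - y)))
    (fun s _ => hasDerivAt_lagrangian_comp_add_smul (hA.of_le (by norm_num))
      (hJ.of_le (by norm_num)) s)
    (fun s _ => hasDerivAt_lagrangianLineDeriv (k := 0) (hA.of_le (by norm_num))
      (hJ.of_le (by norm_num)) s)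
    (fun s _ => hasDerivAt_lagrangianLineDeriv (k := 1) (hA.of_le (by norm_num))
      (hJ.of_le (by norm_num)) s)
    ((continuous_lagrangianLineDeriv (k := 2) hA hJ).intervalIntegrable 0 1)
  have hstationary : lagrangianLineDeriv A J x y (u - x) (z - y) 0 1 = 0 := by
    rw [lagrangianLineDeriv_zero_apply, one_smul, one_smul, add_sub_cancel, add_sub_cancel,
      hadjoint _ (sub_mem hu hx), hprimal _ (sub_mem hz hy), sub_self, sub_zero]
  simp only [lagrangian, zero_smul, add_zero, one_smul, add_sub_cancel, hprimal z hz, sub_zero,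
    hstationary, lagrangianLineDeriv_zero_apply, Nat.reduceAdd] at trapezoid
  rw [dwrRemainder_eq_integral_lagrangianLineDeriv]
  linarith

end Lagrangian

theorem dwr_error_representation_discrete_general
    {V : Type*} [NormedAddCommGroup V] [NormedSpace ℝ V]
    (A : V → (V →L[ℝ] ℝ)) (J : V → ℝ)
    (hA : ContDiff ℝ 3 A) (hJ : ContDiff ℝ 3 J)
    (Vh VN : Submodule ℝ V) (hVhN : Vh ≤ VN)
    (u : V)
    (u₂ : V) (hu₂mem : u₂ ∈ VN) (hu₂ : ∀ v ∈ VN, A u₂ v = 0)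
    (z₂ : V) (hz₂mem : z₂ ∈ VN)
    (hz₂ : ∀ v ∈ VN, fderiv ℝ A u₂ v z₂ = fderiv ℝ J u₂ v)
    (uh : V) (huhmem : uh ∈ Vh) (huh : ∀ v ∈ Vh, A uh v = 0)
    (zh : V) (hzhmem : zh ∈ Vh) :
    -(A uh zh) = 0
    ∧ J u - J uh
        = (J u - J u₂)
          + (1/2) * ((-(A uh (z₂ - zh)))
              + (fderiv ℝ J uh (u₂ - uh) - fderiv ℝ A uh (u₂ - uh) zh))
          + (1/2) * ∫ s in (0:ℝ)..1,
              (iteratedFDeriv ℝ 3 J (uh + s • (u₂ - uh)) ![u₂ - uh, u₂ - uh, u₂ - uh]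
                - (iteratedFDeriv ℝ 3 A (uh + s • (u₂ - uh)) ![u₂ - uh, u₂ - uh, u₂ - uh])
                    (zh + s • (z₂ - zh))
                - 3 * (iteratedFDeriv ℝ 2 A (uh + s • (u₂ - uh)) ![u₂ - uh, u₂ - uh])
                    (z₂ - zh))
              * (s * (s - 1)) := by
  have hρ : A uh zh = 0 := huh zh hzhmem
  have hrepr := dwr_error_representation hA hJ VN hu₂mem hz₂mem (hVhN huhmem) (hVhN hzhmem) hu₂ hz₂
  rw [hρ, neg_zero, add_zero, dwrRemainder] at hrepr
  exact ⟨by rw [hρ, neg_zero], by linarith⟩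

/-- Error representation at the exact discrete solutions (the iteration error
vanishes): under the hypotheses of Theorem 1 with nested subspaces `V_h ⊆ V_N ⊆ V`,
if `u_h ∈ V_h` solves the discrete primal problem and `z_h ∈ V_h`, then
`ρ(u_h)(z_h) = 0` and
`J(u) − J(u_h) = (J(u) − J(u₂)) + η_h + R⁽³⁾`, where
`η_h := (1/2)(ρ(u_h)(z₂ − z_h) + ρ*(u_h,z_h)(u₂ − u_h))` and `R⁽³⁾` is the
remainder of Theorem 1 with `ũ = u_h`, `z̃ = z_h`, `e = u₂ − u_h`, `e* = z₂ − z_h`. -/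
theorem dwr_error_representation_discrete
    {V : Type*} [NormedAddCommGroup V] [NormedSpace ℝ V] [CompleteSpace V]
    (A : V → (V →L[ℝ] ℝ)) (J : V → ℝ)
    (hA : ContDiff ℝ 3 A) (hJ : ContDiff ℝ 3 J)
    (Vh VN : Submodule ℝ V) (hVhN : Vh ≤ VN)
    (u : V) (hu : ∀ v : V, A u v = 0)
    (u₂ : V) (hu₂mem : u₂ ∈ VN) (hu₂ : ∀ v ∈ VN, A u₂ v = 0)
    (z₂ : V) (hz₂mem : z₂ ∈ VN)
    (hz₂ : ∀ v ∈ VN, fderiv ℝ A u₂ v z₂ = fderiv ℝ J u₂ v)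
    (uh : V) (huhmem : uh ∈ Vh) (huh : ∀ v ∈ Vh, A uh v = 0)
    (zh : V) (hzhmem : zh ∈ Vh) :
    -(A uh zh) = 0
    ∧ J u - J uh
        = (J u - J u₂)
          + (1/2) * ((-(A uh (z₂ - zh)))
              + (fderiv ℝ J uh (u₂ - uh) - fderiv ℝ A uh (u₂ - uh) zh))
          + (1/2) * ∫ s in (0:ℝ)..1,
              (iteratedFDeriv ℝ 3 J (uh + s • (u₂ - uh)) ![u₂ - uh, u₂ - uh, u₂ - uh]
                - (iteratedFDeriv ℝ 3 A (uh + s • (u₂ - uh)) ![u₂ - uh, u₂ - uh, u₂ - uh])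
                    (zh + s • (z₂ - zh))
                - 3 * (iteratedFDeriv ℝ 2 A (uh + s • (u₂ - uh)) ![u₂ - uh, u₂ - uh])
                    (z₂ - zh))
              * (s * (s - 1)) :=
  dwr_error_representation_discrete_general A J hA hJ Vh VN hVhN u u₂ hu₂mem hu₂ z₂ hz₂mem hz₂ uh
    huhmem huh zh hzhmem
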